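/- Contiguous relation for monic little q-Jacobi polynomials in β: for n ≥ 1, p̃_n(x; α, β/q | q) = p̃_n(x; α, β | q) − [αβ q^{2n} (q^n − 1)(α q^n − 1) / ((αβ q^{2n} − 1)(αβ q^{2n} − q))] · p̃_{n−1}(x; α, β | q), as a polynomial identity in x (assuming the denominators are nonzero). -/

import Mathlib

/-- The q-Pochhammer symbol `(a; q)_m`. -/
noncomputable def qPoch (q a : ℝ) (m : ℕ) : ℝ := ∏ j ∈ Finset.range m, (1 - a * q ^ j)

/-- The monic little q-Jacobi polynomial
`p̃_n(x; α, β | q) = (−1)^n q^{n(n−1)/2} ((αq;q)_n / (αβq^{n+1};q)_n) ₂φ₁(q^{-n}, αβq^{n+1}; αq; q, qx)`. -/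
noncomputable def littleQJacobi (q α β : ℝ) (n : ℕ) (x : ℝ) : ℝ :=
  (-1 : ℝ) ^ n * q ^ (n * (n - 1) / 2) *
    (qPoch q (α * q) n / qPoch q (α * β * q ^ (n + 1)) n) *
    ∑ m ∈ Finset.range (n + 1),
      qPoch q (q ^ (-(n : ℤ))) m * qPoch q (α * β * q ^ (n + 1)) m * (q * x) ^ m /
        (qPoch q (α * q) m * qPoch q q m)

/-!
`p̃_n(x; α, β)` is a prefactor times the terminating series `₂φ₁(q^{-n}, αβq^{n+1}; αq; q, qx)`.
With `b = αβq^n`, the three polynomials in the relation therefore involve `φ(q^{-n}, b)`,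
`φ(q^{-n}, bq)` and `φ(q^{-n+1}, b)`, which are linked by the contiguous relation
`(a - b) φ(a, b) = a (1 - b) φ(a, bq) - b (1 - a) φ(aq, b)`. It holds term by term because
`(1 - a) (aq; q)_m = (a; q)_m (1 - aq^m)`; what remains is a comparison of the prefactors.
-/

open Finset

lemma qPoch_succ (q a : ℝ) (m : ℕ) : qPoch q a (m + 1) = qPoch q a m * (1 - a * q ^ m) :=
  prod_range_succ _ _

lemma one_sub_mul_qPoch_mul (q a : ℝ) (m : ℕ) :
    (1 - a) * qPoch q (a * q) m = qPoch q a m * (1 - a * q ^ m) := by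
  rw [← qPoch_succ]
  unfold qPoch
  rw [prod_range_succ', pow_zero, mul_one, mul_comm]
  congr 1
  exact prod_congr rfl fun j _ => by ring

lemma qPoch_ne_zero {q a : ℝ} {m : ℕ} (h : ∀ j < m, a * q ^ j ≠ 1) : qPoch q a m ≠ 0 :=
  prod_ne_zero_iff.mpr fun j hj => sub_ne_zero.mpr (h j (mem_range.mp hj)).symm

lemma qPoch_zpow_neg_succ {q : ℝ} (hq : q ≠ 0) (k : ℕ) :
    qPoch q (q ^ (-(k : ℤ))) (k + 1) = 0 := by
  rw [qPoch_succ, zpow_neg, zpow_natCast, inv_mul_cancel₀ (pow_ne_zero k hq), sub_self, mul_zero]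

/-- The partial sum up to `z ^ N` of `₂φ₁(a, b; c; q, z)`; when `a = q^{-n}` and `n ≤ N` it is the
whole terminating series. -/
noncomputable def phi21 (q a b c z : ℝ) (N : ℕ) : ℝ :=
  ∑ m ∈ range (N + 1), qPoch q a m * qPoch q b m * z ^ m / (qPoch q c m * qPoch q q m)

lemma phi21_succ_of_qPoch_eq_zero {q a : ℝ} (b c z : ℝ) {N : ℕ} (ha : qPoch q a (N + 1) = 0) :
    phi21 q a b c z (N + 1) = phi21 q a b c z N := by
  rw [phi21, sum_range_succ, ha, zero_mul, zero_mul, zero_div, add_zero, phi21]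

theorem phi21_contiguous (q a b c z : ℝ) (N : ℕ) :
    (a - b) * phi21 q a b c z N
      = a * (1 - b) * phi21 q a (b * q) c z N - b * (1 - a) * phi21 q (a * q) b c z N := by
  simp only [phi21, mul_sum, ← sum_sub_distrib]
  refine sum_congr rfl fun m _ => ?_
  linear_combination (b * qPoch q b m * z ^ m / (qPoch q c m * qPoch q q m)) *
      one_sub_mul_qPoch_mul q a m
    - (a * qPoch q a m * z ^ m / (qPoch q c m * qPoch q q m)) * one_sub_mul_qPoch_mul q b m

theorem phi21_contiguous_terminating {q : ℝ} (hq : q ≠ 0) (b c z : ℝ) (k : ℕ) :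
    (1 - b * q ^ (k + 1)) * phi21 q (q ^ (-((k + 1 : ℕ) : ℤ))) b c z (k + 1)
      = (1 - b) * phi21 q (q ^ (-((k + 1 : ℕ) : ℤ))) (b * q) c z (k + 1)
        - b * (q ^ (k + 1) - 1) * phi21 q (q ^ (-(k : ℤ))) b c z k := by
  set a : ℝ := q ^ (-((k + 1 : ℕ) : ℤ)) with ha
  have haq : a * q = q ^ (-(k : ℤ)) := by
    rw [ha, ← zpow_add_one₀ hq]
    push_cast
    ring_nf
  have hwa : q ^ (k + 1) * a = 1 := by
    rw [ha, zpow_neg, zpow_natCast, mul_inv_cancel₀ (pow_ne_zero _ hq)]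
  have hvanish : qPoch q (a * q) (k + 1) = 0 := haq ▸ qPoch_zpow_neg_succ hq k
  rw [← haq, ← phi21_succ_of_qPoch_eq_zero b c z hvanish]
  linear_combination q ^ (k + 1) * phi21_contiguous q a b c z (k + 1) +
    ((1 - b) * phi21 q a (b * q) c z (k + 1) + b * phi21 q (a * q) b c z (k + 1)
      - phi21 q a b c z (k + 1)) * hwa

lemma littleQJacobi_eq_phi21 (q α β : ℝ) (n : ℕ) (x : ℝ) :
    littleQJacobi q α β n x = (-1) ^ n * q ^ (n * (n - 1) / 2) *
      (qPoch q (α * q) n / qPoch q (α * β * q ^ (n + 1)) n) *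
        phi21 q (q ^ (-(n : ℤ))) (α * β * q ^ (n + 1)) (α * q) (q * x) n :=
  rfl

lemma succ_mul_self_div_two (k : ℕ) : (k + 1) * k / 2 = k * (k - 1) / 2 + k := by
  have h := Nat.choose_succ_succ' k 1
  rw [Nat.choose_one_right, Nat.choose_two_right, Nat.choose_two_right, Nat.add_sub_cancel] at h
  rw [h, add_comm]

theorem littleQJacobi_shift_beta_general (q α β : ℝ) (n : ℕ)
    (hq : 0 < q) (hn : 1 ≤ n)
    (hαβ : ∀ m : ℕ, α * β * q ^ m ≠ 1) :
    ∀ x : ℝ,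
      littleQJacobi q α (β / q) n x
        = littleQJacobi q α β n x
          - (α * β * q ^ (2 * n) * (q ^ n - 1) * (α * q ^ n - 1) /
              ((α * β * q ^ (2 * n) - 1) * (α * β * q ^ (2 * n) - q))) *
            littleQJacobi q α β (n - 1) x := by
  intro x
  obtain ⟨k, rfl⟩ : ∃ k, n = k + 1 := ⟨n - 1, by omega⟩
  have hq0 : q ≠ 0 := hq.ne'
  set b := α * β * q ^ (k + 1) with hb
  have hbq : ∀ j, b * q ^ j ≠ 1 := fun j => by rw [hb, mul_assoc, ← pow_add]; exact hαβ _
  have hb1 : 1 - b ≠ 0 := sub_ne_zero.mpr (by simpa using (hbq 0).symm)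
  have hbk : 1 - b * q ^ k ≠ 0 := sub_ne_zero.mpr (hbq k).symm
  have hbk1 : 1 - b * q ^ (k + 1) ≠ 0 := sub_ne_zero.mpr (hbq (k + 1)).symm
  have hY : qPoch q b k ≠ 0 := qPoch_ne_zero fun j _ => hbq j
  have hseries := eq_div_of_mul_eq hbk1
    ((mul_comm _ _).trans (phi21_contiguous_terminating hq0 b (α * q) (q * x) k))
  have hpoch : qPoch q (b * q) (k + 1)
      = qPoch q b k * (1 - b * q ^ k) * (1 - b * q ^ (k + 1)) / (1 - b) := by
    rw [eq_div_iff hb1, mul_comm, one_sub_mul_qPoch_mul, qPoch_succ]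
  rw [littleQJacobi_eq_phi21, littleQJacobi_eq_phi21, littleQJacobi_eq_phi21,
    show α * (β / q) * q ^ (k + 1 + 1) = b by rw [hb]; field_simp; ring,
    show α * β * q ^ (k + 1 + 1) = b * q by rw [hb]; ring,
    show α * β * q ^ (2 * (k + 1)) = b * q ^ (k + 1) by rw [hb]; ring,
    Nat.add_sub_cancel, ← hb, succ_mul_self_div_two, hseries, hpoch, qPoch_succ, qPoch_succ,
    pow_add, show b * q ^ (k + 1) - q = -q * (1 - b * q ^ k) by ring,
    show b * q ^ (k + 1) - 1 = -(1 - b * q ^ (k + 1)) by ring]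
  rw [pow_succ] at hbk1 ⊢
  field_simp
  ring

/-- Contiguous relation for monic little q-Jacobi polynomials in β. -/
theorem littleQJacobi_shift_beta (q α β : ℝ) (n : ℕ)
    (hq : 0 < q) (hq1 : q < 1) (hn : 1 ≤ n)
    (hα : ∀ m : ℕ, α * q ^ m ≠ 1) (hαβ : ∀ m : ℕ, α * β * q ^ m ≠ 1) :
    ∀ x : ℝ,
      littleQJacobi q α (β / q) n x
        = littleQJacobi q α β n x
          - (α * β * q ^ (2 * n) * (q ^ n - 1) * (α * q ^ n - 1) /
              ((α * β * q ^ (2 * n) - 1) * (α * β * q ^ (2 * n) - q))) *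
            littleQJacobi q α β (n - 1) x :=
  littleQJacobi_shift_beta_general q α β n hq hn hαβ
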